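/- Correctness of MulBounded: let A, B be l×l matrices that are row-monotone, column-monotone on valid cells, with valid entries being integers in [0, t_A] and [0, t_B] respectively, and −∞ on other cells. Then the matrix C computed by, for each column j, each x ∈ [0,t_B], each y ∈ [0,t_A], setting k = max{i : B_{i,j} ≥ x}, i = max{i' : A_{i',k} ≥ y}, and applying range-max updates C_{i',j'} ← max(C_{i',j'}, A_{i,k}+B_{k,j}) over all valid (i',j') with i' ≤ i and j' ≥ j, agrees with A ⋆ B on all valid cells. -/
import Mathlib


/-- The `(max,+)` product of `l×l` matrices over `ℤ ∪ {-∞}`. -/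
def star (l : ℕ) (A B : ℕ → ℕ → WithBot ℤ) (i j : ℕ) : WithBot ℤ :=
  (Finset.range l).sup fun k => A i k + B k j

/-- `maxrow l B j x = max { i < l | B_{i,j} ≥ x }` (as `WithBot ℕ`, `⊥` if no such `i`). -/
def maxrow (l : ℕ) (B : ℕ → ℕ → WithBot ℤ) (j x : ℕ) : WithBot ℕ :=
  ((Finset.range l).filter (fun i => (x : WithBot ℤ) ≤ B i j)).max

/-- The matrix computed by MulBounded: for each column `j`, each `x ∈ [0,t_B]` and each
`y ∈ [0,t_A]`, let `k = max{i : B_{i,j} ≥ x}` and `i = max{i' : A_{i',k} ≥ y}`, and apply the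
range-max update `C_{i',j'} ← max(C_{i',j'}, A_{i,k} + B_{k,j})` over all valid `(i',j')`
with `i' ≤ i` and `j' ≥ j` (valid means `i' ≤ j'` and `j' - i' ≤ L`). -/
def mulBounded (l L tA tB : ℕ) (A B : ℕ → ℕ → WithBot ℤ) (i' j' : ℕ) : WithBot ℤ :=
  ((Finset.range l) ×ˢ (Finset.range (tB + 1)) ×ˢ (Finset.range (tA + 1))).sup fun w =>
    (maxrow l B w.1 w.2.1).recBotCoe ⊥ fun k =>
      (maxrow l A k w.2.2).recBotCoe ⊥ fun i =>
        if i' ≤ i ∧ w.1 ≤ j' ∧ i' ≤ j' ∧ j' - i' ≤ L then A i k + B k w.1 else ⊥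


private lemma chain_up9 (f : ℕ → WithBot ℤ) {a b : ℕ} (hab : a ≤ b)
    (h : ∀ m, a ≤ m → m < b → f m ≤ f (m + 1)) : f a ≤ f b := by
  induction b with
  | zero => have : a = 0 := by omega
            subst this; exact le_rfl
  | succ n ih =>
    rcases Nat.lt_or_ge a (n + 1) with h' | h'
    · exact (ih (by omega) fun m hm hm' => h m hm (by omega)).trans
        (h n (by omega) (by omega))
    · have : a = n + 1 := by omega
      subst this; exact le_rfl

private lemma chain_down9 (f : ℕ → WithBot ℤ) {a b : ℕ} (hab : a ≤ b)
    (h : ∀ m, a ≤ m → m < b → f (m + 1) ≤ f m) : f b ≤ f a := by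
  induction b with
  | zero => have : a = 0 := by omega
            subst this; exact le_rfl
  | succ n ih =>
    rcases Nat.lt_or_ge a (n + 1) with h' | h'
    · exact (h n (by omega) (by omega)).trans
        (ih (by omega) fun m hm hm' => h m hm (by omega))
    · have : a = n + 1 := by omega
      subst this; exact le_rfl

/-- correctness of MulBounded: if `A, B` are `l×l` matrices which on valid
cells are row-monotone, column-monotone with integer entries in `[0,t_A]` resp. `[0,t_B]`,
and `-∞` elsewhere, then the matrix computed by MulBounded agrees with the `(max,+)`
product `A ⋆ B` on all valid cells. -/
theorem stmt9 (l L tA tB : ℕ) (A B : ℕ → ℕ → WithBot ℤ)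
    (hA : ∀ i j, i < l → j < l →
      ((i ≤ j ∧ j - i ≤ L) → ∃ v : ℤ, 0 ≤ v ∧ v ≤ (tA : ℤ) ∧ A i j = v) ∧
      (¬(i ≤ j ∧ j - i ≤ L) → A i j = ⊥))
    (hB : ∀ i j, i < l → j < l →
      ((i ≤ j ∧ j - i ≤ L) → ∃ v : ℤ, 0 ≤ v ∧ v ≤ (tB : ℤ) ∧ B i j = v) ∧
      (¬(i ≤ j ∧ j - i ≤ L) → B i j = ⊥))
    (hArow : ∀ i j, i ≤ j → j + 1 - i ≤ L → j + 1 < l → A i j ≤ A i (j + 1))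
    (hAcol : ∀ i j, i + 1 ≤ j → j - i ≤ L → j < l → A (i + 1) j ≤ A i j)
    (hBrow : ∀ i j, i ≤ j → j + 1 - i ≤ L → j + 1 < l → B i j ≤ B i (j + 1))
    (hBcol : ∀ i j, i + 1 ≤ j → j - i ≤ L → j < l → B (i + 1) j ≤ B i j) :
    ∀ i j, i < l → j < l → i ≤ j → j - i ≤ L →
      mulBounded l L tA tB A B i j = star l A B i j := by
  
  intro i j hi hj hij hL
  apply le_antisymm
  · apply Finset.sup_le
    rintro ⟨j₀, x, y⟩ hw
    simp only [Finset.mem_product, Finset.mem_range] at hw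
    obtain ⟨hj₀l, hxlt, hylt⟩ := hw
    cases hmB : maxrow l B j₀ x using WithBot.recBotCoe with
    | bot => simp
    | coe k =>
      rw [WithBot.recBotCoe_coe]
      have hkmem : k ∈ (Finset.range l).filter (fun i => (x : WithBot ℤ) ≤ B i j₀) :=
        Finset.mem_of_max hmB
      simp only [Finset.mem_filter, Finset.mem_range] at hkmem
      obtain ⟨hkl, hxB⟩ := hkmem
      have hBne : B k j₀ ≠ ⊥ := by
        intro hbot; rw [hbot] at hxB; simp at hxB
      have hv2 : k ≤ j₀ ∧ j₀ - k ≤ L := by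
        by_contra hcon; exact hBne ((hB k j₀ hkl hj₀l).2 hcon)
      cases hmA : maxrow l A k y using WithBot.recBotCoe with
      | bot => simp
      | coe i₀ =>
        rw [WithBot.recBotCoe_coe]
        have hi₀mem : i₀ ∈ (Finset.range l).filter (fun i' => (y : WithBot ℤ) ≤ A i' k) :=
          Finset.mem_of_max hmA
        simp only [Finset.mem_filter, Finset.mem_range] at hi₀mem
        obtain ⟨hi₀l, hyA⟩ := hi₀mem
        have hAne : A i₀ k ≠ ⊥ := by
          intro hbot; rw [hbot] at hyA; simp at hyA
        have hv1 : i₀ ≤ k ∧ k - i₀ ≤ L := by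
          by_contra hcon; exact hAne ((hA i₀ k hi₀l hkl).2 hcon)
        split_ifs with hc
        · obtain ⟨hii₀, hj₀j, _, _⟩ := hc
          have c1 : A i₀ k ≤ A i k :=
            chain_down9 (fun m => A m k) hii₀
              (fun m hm hm' => hAcol m k (by omega) (by omega) hkl)
          have c2 : B k j₀ ≤ B k j :=
            chain_up9 (fun n => B k n) hj₀j
              (fun n hn hn' => hBrow k n (by omega) (by omega) (by omega))
          exact le_trans (add_le_add c1 c2)
            (Finset.le_sup (f := fun k => A i k + B k j) (Finset.mem_range.mpr hkl))
        · exact bot_le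
  · apply Finset.sup_le
    intro k hk
    rw [Finset.mem_range] at hk
    by_cases hv1 : i ≤ k ∧ k - i ≤ L
    · by_cases hv2 : k ≤ j ∧ j - k ≤ L
      · obtain ⟨yv, hyv0, hyvt, hAik⟩ := (hA i k hi hk).1 hv1
        obtain ⟨xv, hxv0, hxvt, hBkj⟩ := (hB k j hk hj).1 hv2
        set x := xv.toNat with hxdef
        set y := yv.toNat with hydef
        have hxc : (x : ℤ) = xv := Int.toNat_of_nonneg hxv0
        have hyc : (y : ℤ) = yv := Int.toNat_of_nonneg hyv0
        have hwmem : (⟨j, x, y⟩ : ℕ × ℕ × ℕ) ∈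
            (Finset.range l) ×ˢ (Finset.range (tB + 1)) ×ˢ (Finset.range (tA + 1)) := by
          simp only [Finset.mem_product, Finset.mem_range]
          refine ⟨hj, by omega, by omega⟩
        refine le_trans ?_ (Finset.le_sup hwmem)
        simp only
        have hkmem : k ∈ (Finset.range l).filter (fun i => (x : WithBot ℤ) ≤ B i j) := by
          simp only [Finset.mem_filter, Finset.mem_range]
          refine ⟨hk, ?_⟩
          rw [hBkj]
          exact_mod_cast le_of_eq hxc
        obtain ⟨k₀, hk₀⟩ := Finset.max_of_mem hkmem
        have hkk₀ : k ≤ k₀ := by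
          have := Finset.le_max hkmem
          rw [hk₀] at this
          exact_mod_cast this
        have hk₀mem := Finset.mem_of_max hk₀
        simp only [Finset.mem_filter, Finset.mem_range] at hk₀mem
        obtain ⟨hk₀l, hxB₀⟩ := hk₀mem
        have hBne : B k₀ j ≠ ⊥ := by
          intro hbot; rw [hbot] at hxB₀; simp at hxB₀
        have hv3 : k₀ ≤ j ∧ j - k₀ ≤ L := by
          by_contra hcon; exact hBne ((hB k₀ j hk₀l hj).2 hcon)
        simp only [maxrow]
        rw [hk₀, WithBot.recBotCoe_coe]
        have cA : A i k ≤ A i k₀ :=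
          chain_up9 (fun n => A i n) hkk₀
            (fun n hn hn' => hArow i n (by omega) (by omega) (by omega))
        have himem : i ∈ (Finset.range l).filter (fun i' => (y : WithBot ℤ) ≤ A i' k₀) := by
          simp only [Finset.mem_filter, Finset.mem_range]
          refine ⟨hi, le_trans ?_ cA⟩
          rw [hAik]
          exact_mod_cast le_of_eq hyc
        obtain ⟨i₀, hi₀⟩ := Finset.max_of_mem himem
        have hii₀ : i ≤ i₀ := by
          have := Finset.le_max himem
          rw [hi₀] at this
          exact_mod_cast this
        have hi₀mem := Finset.mem_of_max hi₀
        simp only [Finset.mem_filter, Finset.mem_range] at hi₀mem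
        obtain ⟨hi₀l, hyA₀⟩ := hi₀mem
        rw [hi₀, WithBot.recBotCoe_coe, if_pos ⟨hii₀, le_refl j, hij, hL⟩]
        refine add_le_add ?_ ?_
        · rw [hAik]
          calc ((yv : ℤ) : WithBot ℤ) = ((y : ℤ) : WithBot ℤ) := by rw [hyc]
            _ = (y : WithBot ℤ) := by push_cast; ring_nf
            _ ≤ A i₀ k₀ := hyA₀
        · rw [hBkj]
          calc ((xv : ℤ) : WithBot ℤ) = ((x : ℤ) : WithBot ℤ) := by rw [hxc]
            _ = (x : WithBot ℤ) := by push_cast; ring_nf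
            _ ≤ B k₀ j := hxB₀
      · rw [(hB k j hk hj).2 hv2]
        simp
    · rw [(hA i k hi hk).2 hv1]
      simp
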